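/- arXiv:1405.6670 — 4 statements merged into one kernel-verified Lean document; each statement's English description precedes it below -/
import Mathlib

section
/- Let G be a bipartite graph with bipartition (V₁, V₂) where |V₁| = |V₂| = m, and suppose G contains no path of length k (i.e. no path with k edges). Then there exist X₁ ⊆ V₁ and X₂ ⊆ V₂ with |X₁| = |X₂| ≥ (2m − k)/4 such that G has no edges between X₁ and X₂. -/
/-!
Run depth-first search and stop at the first pop after which one side, say `V₁`, has
`N = ⌈(2m - k)/4⌉` finished vertices; the other side then has fewer than `N`. No edge joins a
finished vertex to an unvisited one, and the remaining stack is a path on fewer than `k`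
vertices alternating between the sides, so at most `k/2` of them lie in `V₂`. Hence `V₂` keeps at
least `m - (N - 1) - k/2 ≥ N` unvisited vertices, none adjacent to the `N` finished ones in `V₁`.
-/

open Finset

theorem List.two_mul_card_toFinset_inter_le {α : Type*} [DecidableEq α] {R : α → α → Prop}
    {B : Finset α} (hB : ∀ x y, R x y → x ∈ B → y ∉ B) :
    ∀ {s : List α}, s.IsChain R → 2 * #(s.toFinset ∩ B) ≤ s.length + 1
  | [], _ => by simp
  | v :: s, hs => by
    by_cases hv : v ∈ B
    · match s, hs with
      | [], _ => simpa using card_le_one.2 (by simp)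
      | w :: s, hs =>
        have hw : w ∉ B := hB v w (List.isChain_cons_cons.1 hs).1 hv
        have ih := two_mul_card_toFinset_inter_le hB (s := s) hs.tail.tail
        have : #((v :: w :: s).toFinset ∩ B) ≤ #(s.toFinset ∩ B) + 1 := by
          simpa [insert_inter_of_mem hv, insert_inter_of_notMem hw] using card_insert_le _ _
        simp only [List.length_cons] at ih ⊢
        omega
    · have ih := two_mul_card_toFinset_inter_le hB (s := s) hs.tail
      simp only [List.toFinset_cons, insert_inter_of_notMem hv, List.length_cons] at ih ⊢
      omega

namespace SimpleGraph

variable {V : Type*} {G : SimpleGraph V}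

theorem exists_isPath_length_eq_of_lt_length {s : List V} (hs : s.IsChain G.Adj) (hnd : s.Nodup)
    {k : ℕ} (hk : k < s.length) : ∃ (u v : V) (p : G.Walk u v), p.IsPath ∧ p.length = k := by
  have hne : s.take (k + 1) ≠ [] := List.ne_nil_of_length_pos (by rw [List.length_take]; omega)
  refine ⟨_, _, Walk.ofSupport _ hne (hs.take _), ?_, ?_⟩
  · rw [Walk.isPath_def, Walk.support_ofSupport]
    exact hnd.sublist (List.take_sublist _ _)
  · simp only [Walk.length_ofSupport, List.length_take]
    omega

variable (G) in
/-- A snapshot of depth-first search: `F` is the set of finished vertices and `s` the stack, top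
first; the unvisited vertices are those in neither. -/
structure IsDFSState (F : Finset V) (s : List V) : Prop where
  isChain : s.IsChain G.Adj
  nodup : s.Nodup
  notMem_of_mem : ∀ v ∈ s, v ∉ F
  adj_closed : ∀ x ∈ F, ∀ y, G.Adj x y → y ∈ F ∨ y ∈ s

variable {F : Finset V} {s : List V} {v w : V}

namespace IsDFSState

theorem empty : G.IsDFSState ∅ [] :=
  ⟨List.isChain_nil, List.nodup_nil, by simp, by simp⟩

theorem singleton (hS : G.IsDFSState F []) (hv : v ∉ F) : G.IsDFSState F [v] :=
  ⟨List.isChain_singleton v, List.nodup_singleton v, by simpa using hv,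
    fun x hx y hxy => (hS.adj_closed x hx y hxy).imp_right (by simp)⟩

theorem push (hS : G.IsDFSState F (v :: s)) (hvw : G.Adj v w) (hwF : w ∉ F) (hws : w ∉ v :: s) :
    G.IsDFSState F (w :: v :: s) :=
  ⟨List.isChain_cons_cons.2 ⟨hvw.symm, hS.isChain⟩, List.nodup_cons.2 ⟨hws, hS.nodup⟩,
    by simpa [hwF] using hS.notMem_of_mem,
    fun x hx y hxy => (hS.adj_closed x hx y hxy).imp_right (List.mem_cons_of_mem w)⟩

end IsDFSState

variable [DecidableEq V]

namespace IsDFSState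

theorem pop (hS : G.IsDFSState F (v :: s)) (hv : ∀ w, G.Adj v w → w ∈ F ∨ w ∈ v :: s) :
    G.IsDFSState (insert v F) s where
  isChain := hS.isChain.tail
  nodup := hS.nodup.of_cons
  notMem_of_mem x hx := by
    have hvs : v ∉ s := (List.nodup_cons.1 hS.nodup).1
    simpa [show x ≠ v by rintro rfl; exact hvs hx] using hS.notMem_of_mem x (by simp [hx])
  adj_closed x hx y hxy := by
    have hy : y ∈ F ∨ y ∈ v :: s := by
      rcases mem_insert.1 hx with rfl | hx
      exacts [hv y hxy, hS.adj_closed x hx y hxy]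
    simp only [mem_insert, List.mem_cons] at hy ⊢
    tauto

theorem card_add_length_le [Fintype V] (hS : G.IsDFSState F s) :
    #F + s.length ≤ Fintype.card V := by
  rw [← List.toFinset_card_of_nodup hS.nodup, ← card_union_of_disjoint]
  · exact card_le_univ _
  · exact Finset.disjoint_right.2 fun v hv => hS.notMem_of_mem v (List.mem_toFinset.1 hv)

theorem exists_crossing_pop [Fintype V] (P : Finset V → Prop) (hP : P univ)
    (hS : G.IsDFSState F s) (hF : ¬ P F) :
    ∃ F' v s', G.IsDFSState F' (v :: s') ∧ (∀ w, G.Adj v w → w ∈ F' ∨ w ∈ v :: s') ∧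
      ¬ P F' ∧ P (insert v F') := by
  -- every push and every pop lowers this measure; the search ends only when `F = univ`
  induction hn : 2 * (Fintype.card V - #F) - s.length using Nat.strong_induction_on
    generalizing F s with
  | _ n ih =>
  match s, hS with
  | [], hS =>
    obtain ⟨w, hw⟩ : ∃ w, w ∉ F := by
      by_contra! h
      exact hF (eq_univ_of_forall h ▸ hP)
    have := card_lt_univ_of_notMem hw
    refine ih _ ?_ (hS.singleton hw) hF rfl
    simp only [List.length_nil, List.length_singleton] at hn ⊢
    omega
  | v :: s, hS =>
    by_cases hv : ∀ w, G.Adj v w → w ∈ F ∨ w ∈ v :: s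
    · by_cases hPv : P (insert v F)
      · exact ⟨F, v, s, hS, hv, hF, hPv⟩
      · have hS' := hS.pop hv
        have := hS'.card_add_length_le
        have hvF : v ∉ F := hS.notMem_of_mem v (by simp)
        refine ih _ ?_ hS' hPv rfl
        rw [card_insert_of_notMem hvF] at this ⊢
        rw [List.length_cons] at hn
        omega
    · push Not at hv
      obtain ⟨w, hvw, hwF, hws⟩ := hv
      have hS' := hS.push hvw hwF hws
      have := hS'.card_add_length_le
      refine ih _ ?_ hS' hF rfl
      simp only [List.length_cons] at hn this ⊢
      omega

theorem exists_nonadj_subsets {A B : Finset V} {N : ℕ} (hS : G.IsDFSState F s)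
    (hA : N ≤ #(F ∩ A)) (hB : #(F ∩ B) + #(s.toFinset ∩ B) + N ≤ #B) :
    ∃ X ⊆ A, ∃ Y ⊆ B, #X = N ∧ #Y = N ∧ ∀ x ∈ X, ∀ y ∈ Y, ¬ G.Adj x y := by
  obtain ⟨X, hXF, hX⟩ := exists_subset_card_eq hA
  have hunvisited : N ≤ #(B \ (F ∪ s.toFinset)) := by
    have := card_union_le (F ∩ B) (s.toFinset ∩ B)
    rw [card_sdiff, union_inter_distrib_right]
    omega
  obtain ⟨Y, hYB, hY⟩ := exists_subset_card_eq hunvisited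
  refine ⟨X, hXF.trans inter_subset_right, Y, hYB.trans sdiff_subset, hX, hY, ?_⟩
  intro x hx y hy hxy
  have hy' := mem_sdiff.1 (hYB hy)
  simp only [mem_union, List.mem_toFinset] at hy'
  exact hy'.2 (hS.adj_closed x (mem_inter.1 (hXF hx)).1 y hxy)

theorem exists_nonadj_subsets_of_pop {A B : Finset V} {N k : ℕ} (hS : G.IsDFSState F (v :: s))
    (hv : ∀ w, G.Adj v w → w ∈ F ∨ w ∈ v :: s) (hvB : v ∉ B)
    (hB : ∀ x y, G.Adj x y → x ∈ B → y ∉ B)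
    (hP : N ≤ #(insert v F ∩ A) ∨ N ≤ #(insert v F ∩ B)) (hFB : #(F ∩ B) < N)
    (hk : (v :: s).length ≤ k) (hNB : 4 * N + k ≤ 2 * #B + 3) :
    ∃ X ⊆ A, ∃ Y ⊆ B, #X = N ∧ #Y = N ∧ ∀ x ∈ X, ∀ y ∈ Y, ¬ G.Adj x y := by
  have hFB' : insert v F ∩ B = F ∩ B := insert_inter_of_notMem hvB
  have hFA : N ≤ #(insert v F ∩ A) := hP.resolve_right (by rw [hFB']; omega)
  have hsB := List.two_mul_card_toFinset_inter_le hB hS.isChain.tail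
  rw [List.length_cons] at hk
  rw [List.tail_cons] at hsB
  exact (hS.pop hv).exists_nonadj_subsets hFA (by rw [hFB']; omega)

end IsDFSState

theorem exists_nonadj_subsets_card_eq [Fintype V] {A B : Finset V} (hdisj : Disjoint A B)
    (hunion : A ∪ B = univ) (hbip : ∀ u v : V, G.Adj u v → (u ∈ A ∧ v ∈ B) ∨ (u ∈ B ∧ v ∈ A))
    {k : ℕ} (hk : ∀ s : List V, s.IsChain G.Adj → s.Nodup → s.length ≤ k) {N : ℕ}
    (hNA : 4 * N + k ≤ 2 * #A + 3) (hNB : 4 * N + k ≤ 2 * #B + 3) :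
    ∃ X ⊆ A, ∃ Y ⊆ B, #X = N ∧ #Y = N ∧ ∀ x ∈ X, ∀ y ∈ Y, ¬ G.Adj x y := by
  rcases N.eq_zero_or_pos with rfl | hN
  · exact ⟨∅, empty_subset _, ∅, empty_subset _, rfl, rfl, by simp⟩
  have hA : ∀ x y, G.Adj x y → x ∈ A → y ∉ A := fun x y hxy hx => by
    rcases hbip x y hxy with ⟨-, hy⟩ | ⟨hx', -⟩
    exacts [Finset.disjoint_right.1 hdisj hy, absurd hx (Finset.disjoint_right.1 hdisj hx')]
  have hB : ∀ x y, G.Adj x y → x ∈ B → y ∉ B := fun x y hxy hx => by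
    rcases hbip x y hxy with ⟨hx', -⟩ | ⟨-, hy⟩
    exacts [absurd hx (Finset.disjoint_left.1 hdisj hx'), Finset.disjoint_left.1 hdisj hy]
  obtain ⟨F, v, s, hS, hv, hF, hvF⟩ :=
    IsDFSState.empty.exists_crossing_pop (G := G) (fun F => N ≤ #(F ∩ A) ∨ N ≤ #(F ∩ B))
      (Or.inl (by rw [univ_inter]; omega)) (by simp only [empty_inter, card_empty]; omega)
  rw [not_or, not_le, not_le] at hF
  have hks := hk _ hS.isChain hS.nodup
  rcases mem_union.1 (hunion ▸ mem_univ v) with hvA | hvB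
  · exact hS.exists_nonadj_subsets_of_pop hv (Finset.disjoint_left.1 hdisj hvA) hB hvF hF.2 hks
      hNB
  · obtain ⟨Y, hYB, X, hXA, hY, hX, hYX⟩ := hS.exists_nonadj_subsets_of_pop hv
      (Finset.disjoint_right.1 hdisj hvB) hA hvF.symm hF.1 hks hNA
    exact ⟨X, hXA, Y, hYB, hX, hY, fun x hx y hy hxy => hYX y hy x hx hxy.symm⟩

end SimpleGraph

theorem bipartite_no_long_path_independent_sets {V : Type*} [Fintype V] [DecidableEq V]
    (G : SimpleGraph V) (V₁ V₂ : Finset V) (m k : ℕ)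
    (hdisj : Disjoint V₁ V₂) (hunion : V₁ ∪ V₂ = Finset.univ)
    (hcard₁ : V₁.card = m) (hcard₂ : V₂.card = m)
    (hbip : ∀ u v : V, G.Adj u v → (u ∈ V₁ ∧ v ∈ V₂) ∨ (u ∈ V₂ ∧ v ∈ V₁))
    (hnopath : ¬ ∃ (u v : V) (w : G.Walk u v), w.IsPath ∧ w.length = k) :
    ∃ X₁ X₂ : Finset V, X₁ ⊆ V₁ ∧ X₂ ⊆ V₂ ∧ X₁.card = X₂.card ∧
      (2 * (m : ℝ) - (k : ℝ)) / 4 ≤ (X₁.card : ℝ) ∧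
      ∀ x₁ ∈ X₁, ∀ x₂ ∈ X₂, ¬ G.Adj x₁ x₂ := by
  rcases lt_or_ge (2 * m) k with hmk | hkm
  · refine ⟨∅, ∅, empty_subset _, empty_subset _, rfl, ?_, by simp⟩
    have h : (2 * m : ℝ) ≤ k := by exact_mod_cast hmk.le
    rw [card_empty, Nat.cast_zero]
    linarith
  have hk : ∀ s : List V, s.IsChain G.Adj → s.Nodup → s.length ≤ k := fun s hs hnd =>
    not_lt.1 fun hlt => hnopath (SimpleGraph.exists_isPath_length_eq_of_lt_length hs hnd hlt)
  obtain ⟨X₁, hX₁, X₂, hX₂, hcardX₁, hcardX₂, hX⟩ :=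
    SimpleGraph.exists_nonadj_subsets_card_eq hdisj hunion hbip hk (N := (2 * m - k + 3) / 4)
      (by omega) (by omega)
  refine ⟨X₁, X₂, hX₁, hX₂, hcardX₁.trans hcardX₂.symm, ?_, hX⟩
  have h : (2 * m : ℝ) ≤ 4 * #X₁ + k := by exact_mod_cast (show 2 * m ≤ 4 * #X₁ + k by omega)
  linarith
end

section
/- Let p : ℕ → ℝ with 0 < p(n) < 1 for all n and n·p(n) → ∞ as n → ∞. Then for every α > 0, the probability that the binomial random graph G(n, p(n)) has the property that every red-blue colouring of its edges contains a monochromatic path of length at least (1/2 − α)n tends to 1 as n → ∞. -/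
open MeasureTheory Filter

/-- The simple graph on `Fin n` determined by an indicator function on the
unordered pairs of distinct vertices. -/
def graphOfIndicator (n : ℕ) (ω : {e : Sym2 (Fin n) // ¬ e.IsDiag} → Bool) :
    SimpleGraph (Fin n) where
  Adj v w := ∃ h : v ≠ w, ω ⟨s(v, w), by simp [Sym2.mk_isDiag_iff, h]⟩ = true
  symm := by
    constructor
    rintro v w ⟨h, hvw⟩
    refine ⟨h.symm, ?_⟩
    have he : (⟨s(w, v), by simp [Sym2.mk_isDiag_iff, h.symm]⟩ :
        {e : Sym2 (Fin n) // ¬ e.IsDiag}) =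
        ⟨s(v, w), by simp [Sym2.mk_isDiag_iff, h]⟩ := Subtype.ext (Sym2.eq_swap)
    rw [he]
    exact hvw
  loopless := by
    constructor
    rintro v ⟨h, -⟩
    exact h rfl

/-- The distribution of the binomial random graph `G(n,p)`: the product, over all
unordered pairs of distinct vertices of `Fin n`, of Bernoulli(p) measures. -/
noncomputable def gnpMeasure (n : ℕ) (p : ℝ) (hp : p ≤ 1) :
    Measure ({e : Sym2 (Fin n) // ¬ e.IsDiag} → Bool) :=
  Measure.pi fun _ =>
    (PMF.bernoulli (Real.toNNReal p) (Real.toNNReal_le_one.2 hp)).toMeasure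

open Finset

/-!
Call a graph `k`-joined if every two disjoint sets of at least `k` vertices span an edge. A union
bound over the at most `4 ^ n` pairs of `k`-sets shows that `G(n, p)` fails to be `k`-joined with
probability at most `4 ^ n (1 - p) ^ (k ^ 2) ≤ exp (2 n - p k ^ 2)`, which tends to `0` for
`k = ⌈ε n⌉` once `n p → ∞`.

In a `k`-joined graph on `n > 2 L + 4 k` vertices every red-blue colouring has a monochromatic
path of length `L`. Depth-first search in the red graph either finds one or stops with equal sets
`S`, `U` covering all but `L` vertices and with no red edge between them. Every edge between `S`
and `U` is therefore blue, so a second depth-first search, in the blue graph between `S` and `U`,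
either finds a blue path of length `L` or stops with equal sets `D`, `N` such that no edge joins
`D ∩ S` to `N ∩ U` or `D ∩ U` to `N ∩ S`, and a stack of at most `L` vertices alternating between
`S` and `U`. Joinedness makes one set of each of these two pairs smaller than `k`, and counting
then contradicts `n > 2 L + 4 k`.
-/

theorem List.two_mul_countP_le_of_isChain {α : Type*} {R : α → α → Prop} {p : α → Bool}
    (hR : ∀ x y, R x y → ¬ (p x ∧ p y)) :
    ∀ {l : List α}, l.IsChain R → 2 * l.countP p ≤ l.length + 1
  | [], _ => by simp
  | [x], _ => by cases h : p x <;> simp [h]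
  | x :: y :: t, h => by
    have ih := two_mul_countP_le_of_isChain hR (List.isChain_cons_cons.1 h).2.tail
    have hxy := hR x y (List.isChain_cons_cons.1 h).1
    simp only [List.countP_cons, List.length_cons]
    cases hx : p x <;> cases hy : p y <;> simp_all <;> omega

theorem List.two_mul_card_toFinset_inter_le_of_isChain {α : Type*} [DecidableEq α]
    {R : α → α → Prop} {S : Finset α} (hR : ∀ x y, R x y → ¬ (x ∈ S ∧ y ∈ S)) {l : List α}
    (hl : l.IsChain R) : 2 * #(l.toFinset ∩ S) ≤ l.length + 1 := by
  have hfilter : l.toFinset ∩ S = (l.filter (· ∈ S)).toFinset := by ext; simp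
  calc 2 * #(l.toFinset ∩ S) = 2 * #(l.filter (· ∈ S)).toFinset := by rw [hfilter]
    _ ≤ 2 * (l.filter (· ∈ S)).length := Nat.mul_le_mul_left 2 (List.toFinset_card_le _)
    _ ≤ l.length + 1 := by
      rw [← List.countP_eq_length_filter]
      exact two_mul_countP_le_of_isChain (by simpa using hR) hl

theorem Finset.card_le_card_inter_add_card_inter {α : Type*} [DecidableEq α] {s t u : Finset α}
    (h : s ⊆ t ∪ u) : #s ≤ #(s ∩ t) + #(s ∩ u) := by
  calc #s = #(s ∩ (t ∪ u)) := by rw [inter_eq_left.2 h]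
    _ ≤ #(s ∩ t) + #(s ∩ u) := by rw [inter_union_distrib_left]; exact card_union_le _ _

namespace SimpleGraph

variable {V : Type*}

def IsJoined (G : SimpleGraph V) (k : ℕ) : Prop :=
  ∀ A B : Finset V, Disjoint A B → k ≤ #A → k ≤ #B → ∃ a ∈ A, ∃ b ∈ B, G.Adj a b

def edgeColorClass (G : SimpleGraph V) (c : Sym2 V → Bool) (b : Bool) : SimpleGraph V :=
  G.deleteEdges {e | c e ≠ b}

variable {G : SimpleGraph V}

theorem exists_monochromatic_of_le_edgeColorClass {H : SimpleGraph V} {c : Sym2 V → Bool}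
    {b : Bool} (hH : H ≤ G.edgeColorClass c b) {u v : V} (p : H.Walk u v) (hp : p.IsPath) :
    ∃ q : G.Walk u v, q.IsPath ∧ (∀ e ∈ q.edges, c e = b) ∧ q.length = p.length := by
  have hHG : H ≤ G := hH.trans (deleteEdges_le _)
  refine ⟨p.mapLe hHG, hp.mapLe hHG, fun e he => ?_, Walk.length_mapLe _ _⟩
  rw [Walk.edges_mapLe_eq_edges] at he
  have := edgeSet_mono hH (p.edges_subset_edgeSet he)
  rw [edgeColorClass, edgeSet_deleteEdges] at this
  simpa using this.2

theorem exists_isPath_of_isChain {l : List V} (hc : l.IsChain G.Adj) (hnd : l.Nodup) {L : ℕ}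
    (hL : L < l.length) : ∃ (u v : V) (p : G.Walk u v), p.IsPath ∧ L ≤ p.length := by
  have hne : l ≠ [] := List.ne_nil_of_length_pos (by omega)
  refine ⟨_, _, Walk.ofSupport l hne hc, ?_, ?_⟩
  · rw [Walk.isPath_def, Walk.support_ofSupport]; exact hnd
  · rw [Walk.length_ofSupport]; omega

theorem between_adj_not_both_mem {S U : Finset V} (hSU : Disjoint S U) {x y : V}
    (h : (G.between S U).Adj x y) : ¬ (x ∈ S ∧ y ∈ S) := by
  rintro ⟨hx, hy⟩
  rcases (between_adj.1 h).2 with ⟨-, hy'⟩ | ⟨hx', -⟩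
  exacts [Finset.disjoint_left.1 hSU hy hy', Finset.disjoint_left.1 hSU hx hx']

section DepthFirstSearch

variable [DecidableEq V]

/-- `D`, `N` and `l` are the finished vertices, the unvisited vertices and the stack of a
depth-first search of `G` on the vertex set `W`. -/
structure IsDfsState (G : SimpleGraph V) (W D N : Finset V) (l : List V) : Prop where
  isChain : l.IsChain G.Adj
  nodup : l.Nodup
  disjoint : Disjoint D N
  disjoint_stack_left : Disjoint D l.toFinset
  disjoint_stack_right : Disjoint N l.toFinset
  union_eq : D ∪ N ∪ l.toFinset = W
  not_adj : ∀ x ∈ D, ∀ y ∈ N, ¬ G.Adj x y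

namespace IsDfsState

variable {W D N : Finset V} {l : List V}

theorem card_add_card_add_length (h : G.IsDfsState W D N l) : #D + #N + l.length = #W := by
  rw [← h.union_eq, card_union_of_disjoint
      (disjoint_union_left.2 ⟨h.disjoint_stack_left, h.disjoint_stack_right⟩),
    card_union_of_disjoint h.disjoint, List.toFinset_card_of_nodup h.nodup]

theorem start (W : Finset V) : G.IsDfsState W ∅ W [] where
  isChain := .nil
  nodup := .nil
  disjoint := disjoint_empty_left _
  disjoint_stack_left := disjoint_empty_left _
  disjoint_stack_right := by simp
  union_eq := by simp
  not_adj := by simp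

theorem push_of_nil (h : G.IsDfsState W D N []) {u : V} (hu : u ∈ N) :
    G.IsDfsState W D (N.erase u) [u] where
  isChain := .singleton u
  nodup := List.nodup_singleton u
  disjoint := h.disjoint.mono_right (erase_subset u N)
  disjoint_stack_left := by simpa using fun huD => Finset.disjoint_left.1 h.disjoint huD hu
  disjoint_stack_right := by simp
  union_eq := by rw [← h.union_eq]; ext x; by_cases x = u <;> simp_all
  not_adj x hx y hy := h.not_adj x hx y (mem_of_mem_erase hy)

theorem push {u : V} (h : G.IsDfsState W D N (u :: l)) {x : V} (hx : x ∈ N)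
    (hux : G.Adj u x) :
    G.IsDfsState W D (N.erase x) (x :: u :: l) where
  isChain := h.isChain.cons_cons hux.symm
  nodup := List.nodup_cons.2
    ⟨fun hmem => Finset.disjoint_left.1 h.disjoint_stack_right hx (by simpa using hmem), h.nodup⟩
  disjoint := h.disjoint.mono_right (erase_subset x N)
  disjoint_stack_left := by
    rw [List.toFinset_cons, disjoint_insert_right]
    exact ⟨fun hxD => Finset.disjoint_left.1 h.disjoint hxD hx, h.disjoint_stack_left⟩
  disjoint_stack_right := by
    rw [List.toFinset_cons, disjoint_insert_right]
    exact ⟨notMem_erase x N, h.disjoint_stack_right.mono_left (erase_subset x N)⟩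
  union_eq := by
    rw [← h.union_eq]; ext y; by_cases y = x <;> simp_all
  not_adj a ha b hb := h.not_adj a ha b (mem_of_mem_erase hb)

theorem pop {u : V} (h : G.IsDfsState W D N (u :: l)) (hu : ∀ x ∈ N, ¬ G.Adj u x) :
    G.IsDfsState W (insert u D) N l where
  isChain := h.isChain.tail
  nodup := h.nodup.of_cons
  disjoint := disjoint_insert_left.2
    ⟨fun huN => Finset.disjoint_left.1 h.disjoint_stack_right huN (by simp), h.disjoint⟩
  disjoint_stack_left := disjoint_insert_left.2
    ⟨by simpa using (List.nodup_cons.1 h.nodup).1,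
      h.disjoint_stack_left.mono_right (by simp [List.toFinset_cons])⟩
  disjoint_stack_right := h.disjoint_stack_right.mono_right (by simp [List.toFinset_cons])
  union_eq := by
    rw [← h.union_eq]; ext y; by_cases y = u <;> simp_all
  not_adj a ha b hb := by
    rcases mem_insert.1 ha with rfl | ha
    exacts [hu b hb, h.not_adj a ha b hb]

theorem card_le_card_inter_add_card_inter_add_card_inter (h : G.IsDfsState W D N l)
    {T : Finset V} (hT : T ⊆ W) : #T ≤ #(D ∩ T) + #(N ∩ T) + #(l.toFinset ∩ T) :=
  calc #T = #((D ∪ N ∪ l.toFinset) ∩ T) := by rw [h.union_eq, inter_eq_right.2 hT]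
    _ ≤ _ := by
      rw [union_inter_distrib_right, union_inter_distrib_right]
      exact (card_union_le _ _).trans (add_le_add_left (card_union_le _ _) _)

theorem exists_step (h : G.IsDfsState W D N l) (hlt : #D < #N) :
    ∃ D' N' l', G.IsDfsState W D' N' l' ∧ #D' ≤ #N' ∧
      2 * #N' + l'.length < 2 * #N + l.length := by
  match l, h with
  | [], h =>
    obtain ⟨u, hu⟩ := card_pos.1 (hlt.trans_le' (Nat.zero_le _))
    refine ⟨D, N.erase u, [u], h.push_of_nil hu, ?_, ?_⟩ <;>
      simp only [card_erase_of_mem hu, List.length_singleton, List.length_nil] <;> omega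
  | u :: l, h =>
    by_cases hu : ∃ x ∈ N, G.Adj u x
    · obtain ⟨x, hx, hux⟩ := hu
      refine ⟨D, N.erase x, x :: u :: l, h.push hx hux, ?_, ?_⟩ <;>
        simp only [card_erase_of_mem hx, List.length_cons] <;> omega
    · simp only [not_exists, not_and] at hu
      refine ⟨insert u D, N, l, h.pop hu, (card_insert_le u D).trans hlt, ?_⟩
      simp

end IsDfsState

variable (G) in
theorem exists_isDfsState_card_eq (W : Finset V) :
    ∃ D N l, G.IsDfsState W D N l ∧ #D = #N := by
  suffices ∀ m D N l, 2 * #N + l.length = m → G.IsDfsState W D N l → #D ≤ #N →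
      ∃ D N l, G.IsDfsState W D N l ∧ #D = #N from this _ ∅ W [] rfl (.start W) (by simp)
  intro m
  induction m using Nat.strong_induction_on with
  | _ m ih =>
    rintro D N l rfl h hle
    rcases hle.eq_or_lt with heq | hlt
    · exact ⟨D, N, l, h, heq⟩
    · obtain ⟨D', N', l', h', hle', hdec⟩ := h.exists_step hlt
      exact ih _ hdec D' N' l' rfl h' hle'

variable (G) in
theorem exists_isPath_or_isDfsState (W : Finset V) (L : ℕ) :
    (∃ (u v : V) (p : G.Walk u v), p.IsPath ∧ L ≤ p.length) ∨
      ∃ D N l, G.IsDfsState W D N l ∧ #D = #N ∧ l.length ≤ L := by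
  obtain ⟨D, N, l, h, hDN⟩ := G.exists_isDfsState_card_eq W
  by_cases hL : L < l.length
  · exact .inl (exists_isPath_of_isChain h.isChain h.nodup hL)
  · exact .inr ⟨D, N, l, h, hDN, not_lt.1 hL⟩

theorem exists_isPath_between_or_two_mul_card_lt {S U : Finset V} (hSU : Disjoint S U)
    (hcard : #S = #U) {k : ℕ}
    (hjoin : ∀ A ⊆ S, ∀ B ⊆ U, k ≤ #A → k ≤ #B → ∃ a ∈ A, ∃ b ∈ B, G.Adj a b) (L : ℕ) :
    (∃ (u v : V) (p : (G.between S U).Walk u v), p.IsPath ∧ L ≤ p.length) ∨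
      2 * #S < L + 4 * k := by
  rcases (G.between S U).exists_isPath_or_isDfsState (S ∪ U) L with
    hpath | ⟨D, N, l, h, hDN, hl⟩
  · exact .inl hpath
  refine .inr ?_
  have hsum := h.card_add_card_add_length
  rw [card_union_of_disjoint hSU] at hsum
  have hW : D ∪ N ∪ l.toFinset ⊆ S ∪ U := h.union_eq.le
  have hD : #D ≤ #(D ∩ S) + #(D ∩ U) :=
    card_le_card_inter_add_card_inter fun x hx => hW (by simp [hx])
  have hN : #N ≤ #(N ∩ S) + #(N ∩ U) :=
    card_le_card_inter_add_card_inter fun x hx => hW (by simp [hx])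
  have hS := h.card_le_card_inter_add_card_inter_add_card_inter subset_union_left
  have hU := h.card_le_card_inter_add_card_inter_add_card_inter subset_union_right
  have hlS : 2 * #(l.toFinset ∩ S) ≤ l.length + 1 :=
    List.two_mul_card_toFinset_inter_le_of_isChain (fun _ _ => between_adj_not_both_mem hSU)
      h.isChain
  have hlU : 2 * #(l.toFinset ∩ U) ≤ l.length + 1 :=
    List.two_mul_card_toFinset_inter_le_of_isChain
      (fun _ _ hxy => between_adj_not_both_mem hSU.symm (by rwa [between_comm])) h.isChain
  -- An edge of `G` from `D ∩ S` to `N ∩ U`, or from `N ∩ S` to `D ∩ U`, would join `D` to `N`.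
  have hDS_NU : #(D ∩ S) < k ∨ #(N ∩ U) < k := by
    by_contra! hk
    obtain ⟨a, ha, b, hb, hab⟩ := hjoin _ inter_subset_right _ inter_subset_right hk.1 hk.2
    exact h.not_adj a (mem_inter.1 ha).1 b (mem_inter.1 hb).1
      ⟨hab, .inl ⟨(mem_inter.1 ha).2, (mem_inter.1 hb).2⟩⟩
  have hNS_DU : #(N ∩ S) < k ∨ #(D ∩ U) < k := by
    by_contra! hk
    obtain ⟨a, ha, b, hb, hab⟩ := hjoin _ inter_subset_right _ inter_subset_right hk.1 hk.2
    exact h.not_adj b (mem_inter.1 hb).1 a (mem_inter.1 ha).1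
      ⟨hab.symm, .inr ⟨(mem_inter.1 hb).2, (mem_inter.1 ha).2⟩⟩
  omega

variable [Fintype V]

theorem IsJoined.exists_monochromatic_path {k L : ℕ} (hG : G.IsJoined k)
    (hn : 2 * L + 4 * k + 1 ≤ Fintype.card V) (c : Sym2 V → Bool) :
    ∃ (u v : V) (p : G.Walk u v) (b : Bool),
      p.IsPath ∧ (∀ e ∈ p.edges, c e = b) ∧ L ≤ p.length := by
  rcases (G.edgeColorClass c true).exists_isPath_or_isDfsState univ L with
    ⟨u, v, p, hp, hL⟩ | ⟨S, U, l, h, hSU, hl⟩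
  · obtain ⟨q, hq, hqc, hqp⟩ := exists_monochromatic_of_le_edgeColorClass le_rfl p hp
    exact ⟨u, v, q, true, hq, hqc, hqp ▸ hL⟩
  have hsum := h.card_add_card_add_length
  rw [card_univ] at hsum
  have hjoin : ∀ A ⊆ S, ∀ B ⊆ U, k ≤ #A → k ≤ #B →
      ∃ a ∈ A, ∃ b ∈ B, (G.edgeColorClass c false).Adj a b := by
    intro A hA B hB hkA hkB
    obtain ⟨a, ha, b, hb, hab⟩ := hG A B (h.disjoint.mono hA hB) hkA hkB
    have hred := h.not_adj a (hA ha) b (hB hb)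
    exact ⟨a, ha, b, hb, by simpa [edgeColorClass, hab] using hred⟩
  rcases exists_isPath_between_or_two_mul_card_lt h.disjoint hSU hjoin L with
    ⟨u, v, p, hp, hL⟩ | hlt
  · obtain ⟨q, hq, hqc, hqp⟩ := exists_monochromatic_of_le_edgeColorClass between_le p hp
    exact ⟨u, v, q, false, hq, hqc, hqp ▸ hL⟩
  · omega

end DepthFirstSearch

end SimpleGraph

section RandomGraph

variable {n : ℕ} {p : ℝ}

instance (hp1 : p ≤ 1) : IsProbabilityMeasure (gnpMeasure n p hp1) := by
  unfold gnpMeasure; infer_instance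

theorem gnpMeasure_forall_eq_false (hp0 : 0 ≤ p) (hp1 : p ≤ 1)
    (E : Finset {e : Sym2 (Fin n) // ¬ e.IsDiag}) :
    gnpMeasure n p hp1 {ω | ∀ e ∈ E, ω e = false} = ENNReal.ofReal (1 - p) ^ #E := by
  have hset : {ω | ∀ e ∈ E, ω e = false} = (E : Set _).pi fun _ => ({false} : Set Bool) := by
    ext; simp [Set.pi]
  rw [hset, gnpMeasure, Measure.pi_pi_finset, prod_const]
  congr 1
  rw [PMF.toMeasure_apply_singleton _ _ (measurableSet_singleton _), PMF.bernoulli_apply,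
    Bool.cond_false, ENNReal.coe_sub, ENNReal.coe_one, ENNReal.ofReal_sub 1 hp0,
    ENNReal.ofReal_one]
  rfl

def edgesBetween (A B : Finset (Fin n)) : Finset {e : Sym2 (Fin n) // ¬ e.IsDiag} :=
  ((A ×ˢ B).image fun x => s(x.1, x.2)).subtype _

theorem card_edgesBetween {A B : Finset (Fin n)} (hAB : Disjoint A B) :
    #(edgesBetween A B) = #A * #B := by
  rw [edgesBetween, card_subtype, filter_true_of_mem, card_image_of_injOn, card_product]
  · rintro ⟨a, b⟩ hab ⟨a', b'⟩ hab' h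
    simp only [coe_product, Set.mem_prod, mem_coe] at hab hab'
    rcases Sym2.eq_iff.1 h with ⟨rfl, rfl⟩ | ⟨rfl, rfl⟩
    · rfl
    · exact (Finset.disjoint_left.1 hAB hab.1 hab'.2).elim
  · simp only [mem_image, mem_product, Prod.exists, forall_exists_index, and_imp]
    rintro _ a b ha hb rfl
    simpa using fun hab : a = b => Finset.disjoint_left.1 hAB ha (hab ▸ hb)

theorem gnpMeasure_not_isJoined_le (hp0 : 0 ≤ p) (hp1 : p ≤ 1) (k : ℕ) :
    gnpMeasure n p hp1 {ω | ¬ (graphOfIndicator n ω).IsJoined k}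
      ≤ 4 ^ n * ENNReal.ofReal (1 - p) ^ (k * k) := by
  set P : Finset (Finset (Fin n) × Finset (Fin n)) :=
    {AB ∈ univ.powersetCard k ×ˢ univ.powersetCard k | Disjoint AB.1 AB.2}
  have hsub : {ω | ¬ (graphOfIndicator n ω).IsJoined k} ⊆
      ⋃ AB ∈ P, {ω | ∀ e ∈ edgesBetween AB.1 AB.2, ω e = false} := by
    intro ω hω
    obtain ⟨A, B, hAB, hkA, hkB, hno⟩ : ∃ A B : Finset (Fin n), Disjoint A B ∧ k ≤ #A ∧ k ≤ #B ∧
        ∀ a ∈ A, ∀ b ∈ B, ¬ (graphOfIndicator n ω).Adj a b := by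
      simpa [SimpleGraph.IsJoined] using hω
    obtain ⟨A', hA', hA'k⟩ := exists_subset_card_eq hkA
    obtain ⟨B', hB', hB'k⟩ := exists_subset_card_eq hkB
    refine Set.mem_biUnion (x := (A', B')) (by simp [P, hA'k, hB'k, hAB.mono hA' hB']) ?_
    rintro ⟨e, he⟩ hmem
    simp only [edgesBetween, mem_subtype, mem_image, mem_product, Prod.exists] at hmem
    obtain ⟨a, b, ⟨ha, hb⟩, rfl⟩ := hmem
    simpa [graphOfIndicator, Sym2.mk_isDiag_iff.not.1 he] using hno a (hA' ha) b (hB' hb)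
  have hP : #P ≤ 4 ^ n :=
    calc #P ≤ #(univ.powersetCard k ×ˢ univ.powersetCard k) := card_filter_le _ _
      _ = n.choose k * n.choose k := by simp
      _ ≤ 2 ^ n * 2 ^ n := Nat.mul_le_mul (n.choose_le_two_pow k) (n.choose_le_two_pow k)
      _ = 4 ^ n := by rw [← mul_pow]; norm_num
  calc _ ≤ ∑ AB ∈ P, gnpMeasure n p hp1 {ω | ∀ e ∈ edgesBetween AB.1 AB.2, ω e = false} :=
        (measure_mono hsub).trans (measure_biUnion_finset_le P _)
    _ = ∑ AB ∈ P, ENNReal.ofReal (1 - p) ^ (k * k) := by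
        refine sum_congr rfl fun AB hAB => ?_
        simp only [P, mem_filter, mem_product, mem_powersetCard] at hAB
        rw [gnpMeasure_forall_eq_false hp0, card_edgesBetween hAB.2, hAB.1.1.2, hAB.1.2.2]
    _ ≤ 4 ^ n * ENNReal.ofReal (1 - p) ^ (k * k) := by
        rw [sum_const, nsmul_eq_mul]
        gcongr
        exact_mod_cast hP

end RandomGraph

theorem four_pow_mul_one_sub_pow_le_exp {n k : ℕ} {p ε : ℝ} (hp0 : 0 ≤ p) (hp1 : p ≤ 1)
    (hε : 0 ≤ ε) (hk : ε * n ≤ k) (hnp : 3 ≤ ε ^ 2 * (n * p)) :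
    (4 : ℝ) ^ n * (1 - p) ^ (k * k) ≤ Real.exp (-n) := by
  have h4 : (4 : ℝ) ^ n ≤ Real.exp (2 * n) := by
    rw [mul_comm, Real.exp_nat_mul]
    gcongr
    linarith [Real.quadratic_le_exp_of_nonneg (x := 2) (by norm_num)]
  have hpk : 3 * n ≤ p * (k * k) := by
    have hεk : (ε * n) ^ 2 ≤ (k : ℝ) ^ 2 := pow_le_pow_left₀ (by positivity) hk 2
    nlinarith
  have hdecay : (1 - p) ^ (k * k) ≤ Real.exp (-(3 * n)) :=
    calc (1 - p) ^ (k * k) ≤ Real.exp (-p) ^ (k * k) :=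
          pow_le_pow_left₀ (by linarith) (Real.one_sub_le_exp_neg p) _
      _ = Real.exp (-(p * (k * k))) := by rw [← Real.exp_nat_mul]; push_cast; ring_nf
      _ ≤ Real.exp (-(3 * n)) := Real.exp_le_exp.2 (by linarith)
  calc (4 : ℝ) ^ n * (1 - p) ^ (k * k) ≤ Real.exp (2 * n) * Real.exp (-(3 * n)) :=
        mul_le_mul h4 hdecay (by positivity) (by positivity)
    _ = Real.exp (-n) := by rw [← Real.exp_add]; ring_nf

theorem tendsto_gnpMeasure_isJoined {p : ℕ → ℝ} (hp0 : ∀ n, 0 ≤ p n) (hp1 : ∀ n, p n ≤ 1)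
    (hnp : Tendsto (fun n : ℕ => (n : ℝ) * p n) atTop atTop) {ε : ℝ} (hε : 0 < ε) :
    Tendsto (fun n => gnpMeasure n (p n) (hp1 n)
      {ω | (graphOfIndicator n ω).IsJoined ⌈ε * n⌉₊}) atTop (nhds 1) := by
  have hbad : Tendsto (fun n => gnpMeasure n (p n) (hp1 n)
      {ω | ¬ (graphOfIndicator n ω).IsJoined ⌈ε * n⌉₊}) atTop (nhds 0) := by
    have hexp : Tendsto (fun n : ℕ => ENNReal.ofReal (Real.exp (-n))) atTop (nhds 0) := by
      simpa using (ENNReal.tendsto_ofReal (Real.tendsto_exp_atBot.comp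
        (tendsto_neg_atTop_atBot.comp tendsto_natCast_atTop_atTop)))
    refine tendsto_of_tendsto_of_tendsto_of_le_of_le' tendsto_const_nhds hexp
      (Eventually.of_forall fun _ => zero_le) ?_
    filter_upwards [hnp.eventually_ge_atTop (3 / ε ^ 2)] with n hn
    refine (gnpMeasure_not_isJoined_le (hp0 n) (hp1 n) _).trans ?_
    rw [← ENNReal.ofReal_pow (by linarith [hp1 n]), ← ENNReal.ofReal_ofNat,
      ← ENNReal.ofReal_pow (by norm_num), ← ENNReal.ofReal_mul (by positivity)]
    refine ENNReal.ofReal_le_ofReal (four_pow_mul_one_sub_pow_le_exp (hp0 n) (hp1 n) hε.le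
      (Nat.le_ceil _) ?_)
    rwa [div_le_iff₀' (by positivity)] at hn
  have hgood := ENNReal.Tendsto.sub tendsto_const_nhds hbad (.inl ENNReal.one_ne_top)
  rw [tsub_zero] at hgood
  refine hgood.congr fun n => ?_
  rw [← prob_compl_eq_one_sub (Set.toFinite _).measurableSet, ← Set.compl_ofPred, compl_compl]

theorem eventually_two_mul_ceil_add_four_mul_ceil_add_one_le {β : ℝ} (hβ : 0 < β)
    (hβ' : β ≤ 1 / 2) :
    ∀ᶠ n : ℕ in atTop, 2 * ⌈(1 / 2 - β) * n⌉₊ + 4 * ⌈β / 4 * n⌉₊ + 1 ≤ n := by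
  filter_upwards [eventually_ge_atTop ⌈7 / β⌉₊] with n hn
  have h7 : 7 ≤ β * n := by rwa [Nat.ceil_le, div_le_iff₀' hβ] at hn
  have hL := Nat.ceil_lt_add_one (by nlinarith : 0 ≤ (1 / 2 - β) * n)
  have hk := Nat.ceil_lt_add_one (by positivity : 0 ≤ β / 4 * n)
  have : (2 * ⌈(1 / 2 - β) * n⌉₊ + 4 * ⌈β / 4 * n⌉₊ + 1 : ℝ) ≤ n := by linarith
  exact_mod_cast this

theorem path_ramsey_random_one_half (p : ℕ → ℝ) (hp : ∀ n, 0 < p n ∧ p n < 1)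
    (hnp : Tendsto (fun n : ℕ => (n : ℝ) * p n) atTop atTop)
    (α : ℝ) (hα : 0 < α) :
    Tendsto
      (fun n : ℕ =>
        gnpMeasure n (p n) (hp n).2.le
          {ω | ∀ c : Sym2 (Fin n) → Bool,
            ∃ (u v : Fin n) (w : (graphOfIndicator n ω).Walk u v) (b : Bool),
              w.IsPath ∧ (∀ e ∈ w.edges, c e = b) ∧
                (1 / 2 - α) * (n : ℝ) ≤ (w.length : ℝ)})
      atTop (nhds 1) := by
  set β := min α (1 / 2)
  have hβ : 0 < β := lt_min hα (by norm_num)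
  have hjoined := tendsto_gnpMeasure_isJoined (fun n => (hp n).1.le) (fun n => (hp n).2.le) hnp
    (by positivity : 0 < β / 4)
  refine tendsto_of_tendsto_of_tendsto_of_le_of_le' hjoined tendsto_const_nhds ?_
    (Eventually.of_forall fun _ => prob_le_one)
  filter_upwards [eventually_two_mul_ceil_add_four_mul_ceil_add_one_le hβ (min_le_right _ _)]
    with n hn
  refine measure_mono fun ω hω c => ?_
  obtain ⟨u, v, w, b, hw, hc, hL⟩ :=
    hω.exists_monochromatic_path (by rwa [Fintype.card_fin]) c
  refine ⟨u, v, w, b, hw, hc, ?_⟩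
  calc (1 / 2 - α) * (n : ℝ) ≤ (1 / 2 - β) * n := by gcongr; exact min_le_left _ _
    _ ≤ ⌈(1 / 2 - β) * n⌉₊ := Nat.le_ceil _
    _ ≤ w.length := by exact_mod_cast hL
end

section
/- For every n ≥ 1 there exists a red-blue colouring of the edges of the complete graph K_n such that every monochromatic path has length at most ⌈2n/3⌉. (Consequently, the constant 2/3 in the path Ramsey results cannot be replaced by any larger constant.) -/
private def myC (a : ℕ) {n : ℕ} : Sym2 (Fin n) → Bool :=
  Sym2.lift ⟨fun x y => xor (decide (x.val < a)) (decide (y.val < a)), by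
    intro x y; simp [Bool.xor_comm]⟩

@[simp] private lemma myC_mk (a : ℕ) {n : ℕ} (x y : Fin n) :
    myC a s(x, y) = xor (decide (x.val < a)) (decide (y.val < a)) := rfl

private lemma red_aux {n a : ℕ} {u v : Fin n} (w : (⊤ : SimpleGraph (Fin n)).Walk u v)
    (h : ∀ e ∈ w.edges, myC a e = true) :
    w.length + (if u.val < a then 1 else 0) ≤
      2 * (w.support.filter (fun x => decide (x.val < a))).length := by
  induction w with
  | nil =>
    rename_i x
    by_cases hx : x.val < a <;> simp [hx]
  | @cons u v' v h' p ih =>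
    have he : myC a s(u, v') = true := h _ (by simp)
    have hrest : ∀ e ∈ p.edges, myC a e = true := fun e he => h e (by simp [he])
    have hne : decide (u.val < a) ≠ decide (v'.val < a) := by
      intro hd
      simp only [myC_mk, hd, Bool.xor_self] at he
      exact Bool.false_ne_true he
    have hih := ih hrest
    simp only [SimpleGraph.Walk.length_cons, SimpleGraph.Walk.support_cons,
      List.filter_cons]
    by_cases hu : u.val < a <;> by_cases hv : v'.val < a <;>
      simp [hu, hv] at hne hih ⊢ <;> omega

private lemma blue_aux {n a : ℕ} {u v : Fin n} (w : (⊤ : SimpleGraph (Fin n)).Walk u v)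
    (h : ∀ e ∈ w.edges, myC a e = false) :
    ∀ x ∈ w.support, (x.val < a ↔ u.val < a) := by
  induction w with
  | nil => simp
  | @cons u v' v h' p ih =>
    have he : myC a s(u, v') = false := h _ (by simp)
    have hrest : ∀ e ∈ p.edges, myC a e = false := fun e he => h e (by simp [he])
    have huv : (v'.val < a ↔ u.val < a) := by
      by_cases h1 : u.val < a <;> by_cases h2 : v'.val < a
      · exact iff_of_true h2 h1
      · simp [h1, h2] at he
      · simp [h1, h2] at he
      · exact iff_of_false h2 h1
    intro x hx
    rcases (by simpa using hx : x = u ∨ x ∈ p.support) with rfl | hx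
    · rfl
    · exact (ih hrest x hx).trans huv

private lemma count_lt_le {n a : ℕ} (l : List (Fin n)) (hl : l.Nodup) :
    (l.filter (fun x => decide (x.val < a))).length ≤ a := by
  set l' := l.filter (fun x => decide (x.val < a)) with hl'
  have hnd : l'.Nodup := hl.filter _
  rw [← List.toFinset_card_of_nodup hnd]
  have hsub : l'.toFinset.image Fin.val ⊆ Finset.range a := by
    intro m hm
    simp only [Finset.mem_image, List.mem_toFinset] at hm
    obtain ⟨x, hx, rfl⟩ := hm
    have hxa : x.val < a := by simpa using List.of_mem_filter hx
    exact Finset.mem_range.2 hxa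
  calc l'.toFinset.card = (l'.toFinset.image Fin.val).card := by
        rw [Finset.card_image_of_injective _ Fin.val_injective]
    _ ≤ (Finset.range a).card := Finset.card_le_card hsub
    _ = a := Finset.card_range a

private lemma count_ge_le {n a : ℕ} (l : List (Fin n)) (hl : l.Nodup) :
    (l.filter (fun x => decide (¬ x.val < a))).length ≤ n - a := by
  set l' := l.filter (fun x => decide (¬ x.val < a)) with hl'
  have hnd : l'.Nodup := hl.filter _
  rw [← List.toFinset_card_of_nodup hnd]
  have hsub : l'.toFinset.image (fun x => x.val - a) ⊆ Finset.range (n - a) := by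
    intro m hm
    simp only [Finset.mem_image, List.mem_toFinset] at hm
    obtain ⟨x, hx, rfl⟩ := hm
    have hxa : ¬ x.val < a := by simpa using List.of_mem_filter hx
    have := x.isLt
    exact Finset.mem_range.2 (by omega)
  have hinj : Set.InjOn (fun x : Fin n => x.val - a) l'.toFinset := by
    intro x hx y hy hxy
    rw [Finset.mem_coe, List.mem_toFinset] at hx hy
    have hxa : ¬ x.val < a := by simpa using List.of_mem_filter hx
    have hya : ¬ y.val < a := by simpa using List.of_mem_filter hy
    simp only at hxy
    exact Fin.ext (by omega)
  calc l'.toFinset.card = (l'.toFinset.image (fun x => x.val - a)).card :=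
        (Finset.card_image_of_injOn hinj).symm
    _ ≤ (Finset.range (n - a)).card := Finset.card_le_card hsub
    _ = n - a := Finset.card_range _

theorem complete_graph_colouring_no_long_mono_path (n : ℕ) (hn : 1 ≤ n) :
    ∃ c : Sym2 (Fin n) → Bool,
      ∀ (u v : Fin n) (w : (⊤ : SimpleGraph (Fin n)).Walk u v) (b : Bool),
        w.IsPath → (∀ e ∈ w.edges, c e = b) →
          (w.length : ℤ) ≤ ⌈2 * (n : ℝ) / 3⌉ := by
  set a := n / 3 with ha
  have ha1 : 3 * a ≤ n := by omega
  have ha2 : n < 3 * a + 3 := by omega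
  have hceil : (⌈2 * (n : ℝ) / 3⌉ : ℤ) = (n : ℤ) - a := by
    rw [Int.ceil_eq_iff]
    have hr1 : 3 * (a : ℝ) ≤ n := by exact_mod_cast ha1
    have hr2 : (n : ℝ) < 3 * a + 3 := by exact_mod_cast ha2
    constructor
    · rw [lt_div_iff₀ (by norm_num : (0:ℝ) < 3)]
      push_cast
      linarith
    · rw [div_le_iff₀ (by norm_num : (0:ℝ) < 3)]
      push_cast
      linarith
  refine ⟨myC a, fun u v w b hp hmono => ?_⟩
  rw [hceil]
  have hkey : w.length ≤ n - a := by
    cases b with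
    | true =>
      have h1 := red_aux w hmono
      have h2 := count_lt_le (a := a) w.support hp.support_nodup
      omega
    | false =>
      have hside := blue_aux w hmono
      have hlen : w.support.length = w.length + 1 := SimpleGraph.Walk.length_support w
      by_cases hu : u.val < a
      · have hfe : w.support.filter (fun x => decide (x.val < a)) = w.support := by
          apply List.filter_eq_self.2
          intro x hx
          simpa using (hside x hx).2 hu
        have h2 := count_lt_le (a := a) w.support hp.support_nodup
        rw [hfe] at h2
        omega
      · have hfe : w.support.filter (fun x => decide (¬ x.val < a)) = w.support := by
          apply List.filter_eq_self.2
          intro x hx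
          simp only [decide_eq_true_eq]
          exact fun hxa => hu ((hside x hx).1 hxa)
        have h2 := count_ge_le (a := a) w.support hp.support_nodup
        rw [hfe] at h2
        omega
  omega
end

section
/- Let 0 ≤ ε ≤ 1 and let G be a graph on n vertices with at least (1 − ε)·C(n,2) edges. Then there exists a set S of vertices with |S| ≥ (1 − √ε)·n such that every vertex of the induced subgraph G[S] has at most √ε·n non-neighbours within S; in particular, the minimum degree of G[S] is at least |S| − 1 − √ε·n. -/
open Finset

theorem dense_graph_large_min_degree_subset {V : Type*} [Fintype V] [DecidableEq V]
    (ε : ℝ) (hε0 : 0 ≤ ε) (hε1 : ε ≤ 1)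
    (n : ℕ) (G : SimpleGraph V) [DecidableRel G.Adj]
    (hn : Fintype.card V = n)
    (hedges : (1 - ε) * ((n.choose 2 : ℕ) : ℝ) ≤ (G.edgeFinset.card : ℝ)) :
    ∃ S : Finset V,
      (1 - Real.sqrt ε) * (n : ℝ) ≤ (S.card : ℝ) ∧
      (∀ v ∈ S,
        ((S.filter (fun u => u ≠ v ∧ ¬ G.Adj v u)).card : ℝ) ≤ Real.sqrt ε * (n : ℝ)) ∧
      (∀ v ∈ S,
        (S.card : ℝ) - 1 - Real.sqrt ε * (n : ℝ) ≤ ((S.filter (fun u => G.Adj v u)).card : ℝ)) := by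
  set s := Real.sqrt ε with hs
  have hs0 : 0 ≤ s := Real.sqrt_nonneg ε
  have hss : s * s = ε := Real.mul_self_sqrt hε0
  -- edge count of the complement
  have hsum_card : G.edgeFinset.card + Gᶜ.edgeFinset.card = n.choose 2 := by
    rw [← hn, ← SimpleGraph.card_edgeFinset_top_eq_card_choose_two,
      ← card_union_of_disjoint (SimpleGraph.disjoint_edgeFinset.2 disjoint_compl_right),
      ← SimpleGraph.edgeFinset_sup]
    congr 1
    ext e
    simp only [SimpleGraph.mem_edgeFinset, SimpleGraph.edgeSet_sup, Set.mem_union,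
      SimpleGraph.edgeSet_top, Set.mem_setOf_eq]
    induction e using Sym2.ind with
    | _ a b =>
      simp only [SimpleGraph.mem_edgeSet, SimpleGraph.compl_adj, Sym2.isDiag_iff_proj_eq]
      constructor
      · rintro (h | ⟨h, _⟩)
        · exact h.ne
        · exact h
      · intro h
        by_cases h2 : G.Adj a b
        · exact Or.inl h2
        · exact Or.inr ⟨h, h2⟩
  have hcompl : (Gᶜ.edgeFinset.card : ℝ) ≤ ε * ((n.choose 2 : ℕ) : ℝ) := by
    have : (G.edgeFinset.card : ℝ) + (Gᶜ.edgeFinset.card : ℝ) = ((n.choose 2 : ℕ) : ℝ) := by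
      exact_mod_cast congrArg (Nat.cast : ℕ → ℝ) hsum_card
    nlinarith [hedges]
  have hchoose : ((n.choose 2 : ℕ) : ℝ) ≤ (n : ℝ) * n / 2 := by
    rcases Nat.eq_zero_or_pos n with h | h
    · simp [h]
    · have := Nat.choose_two_right n
      rw [this]
      have h1 : ((n * (n - 1) / 2 : ℕ) : ℝ) ≤ ((n * n / 2 : ℕ) : ℝ) := by
        exact_mod_cast Nat.div_le_div_right (Nat.mul_le_mul_left n (Nat.sub_le n 1))
      refine h1.trans ?_
      have h2 : ((n * n / 2 : ℕ) : ℝ) ≤ ((n * n : ℕ) : ℝ) / 2 := by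
        exact_mod_cast Nat.cast_div_le
      simpa using h2
  -- sum of complement degrees
  have hdegsum : ((∑ v, Gᶜ.degree v : ℕ) : ℝ) ≤ ε * (n : ℝ) * n := by
    rw [Gᶜ.sum_degrees_eq_twice_card_edges]
    push_cast
    nlinarith [hcompl, hchoose, hε0]
  set S : Finset V := univ.filter (fun v => (Gᶜ.degree v : ℝ) ≤ s * n) with hS
  -- bound on the complement of S
  have hT : ((univ \ S).card : ℝ) ≤ s * n := by
    rcases eq_or_lt_of_le (mul_nonneg hs0 (Nat.cast_nonneg n)) with h0 | h0
    · -- s * n = 0 : then ε * n * n = 0 and all degrees are 0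
      have hεn : ε * (n : ℝ) * n = 0 := by nlinarith
      have hall : ∀ v, (Gᶜ.degree v : ℝ) ≤ s * n := by
        intro v
        have h1 : (Gᶜ.degree v : ℕ) ≤ ∑ u, Gᶜ.degree u :=
          Finset.single_le_sum (f := fun u => Gᶜ.degree u) (fun u _ => Nat.zero_le _)
            (mem_univ v)
        have h2 : ((Gᶜ.degree v : ℕ) : ℝ) ≤ 0 := by
          calc ((Gᶜ.degree v : ℕ) : ℝ) ≤ ((∑ u, Gᶜ.degree u : ℕ) : ℝ) := by exact_mod_cast h1
          _ ≤ ε * n * n := hdegsum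
          _ = 0 := hεn
        linarith [h2, h0]
      have : S = univ := by
        ext v; simp [hS, hall v]
      rw [this, sdiff_self]
      simpa using mul_nonneg hs0 (Nat.cast_nonneg n)
    · -- s * n > 0
      have hlow : ∀ v ∈ univ \ S, s * n ≤ (Gᶜ.degree v : ℝ) := by
        intro v hv
        simp only [hS, mem_sdiff, mem_filter, mem_univ, true_and, not_le] at hv
        exact le_of_lt hv
      have hsum2 : ((univ \ S).card : ℝ) * (s * n) ≤ ε * n * n := by
        calc ((univ \ S).card : ℝ) * (s * n) = ∑ _v ∈ univ \ S, (s * n) := by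
              rw [Finset.sum_const, nsmul_eq_mul]
          _ ≤ ∑ v ∈ univ \ S, (Gᶜ.degree v : ℝ) := Finset.sum_le_sum hlow
          _ ≤ ∑ v, (Gᶜ.degree v : ℝ) := Finset.sum_le_sum_of_subset_of_nonneg
              (Finset.sdiff_subset) (fun v _ _ => Nat.cast_nonneg _)
          _ ≤ ε * n * n := by push_cast at hdegsum ⊢; linarith [hdegsum]
      have hε_eq : ε * (n : ℝ) * n = (s * n) * (s * n) := by nlinarith
      rw [hε_eq] at hsum2
      exact le_of_mul_le_mul_right hsum2 h0
  refine ⟨S, ?_, ?_, ?_⟩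
  · -- size bound
    have hcard : (S.card : ℝ) = n - ((univ \ S).card : ℝ) := by
      have h1 : (univ \ S).card = Fintype.card V - S.card := by
        rw [Finset.card_sdiff_of_subset (subset_univ S), Finset.card_univ]
      have h2 : S.card ≤ Fintype.card V := Finset.card_le_card (subset_univ S)
      rw [h1, hn]
      have h3 : S.card ≤ n := hn ▸ h2
      push_cast [Nat.cast_sub (hn ▸ h2)]
      ring
    rw [hcard]; nlinarith [hT]
  · -- non-neighbour bound
    intro v hv
    simp only [hS, mem_filter, mem_univ, true_and] at hv
    have hsub : S.filter (fun u => u ≠ v ∧ ¬ G.Adj v u) ⊆ Gᶜ.neighborFinset v := by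
      intro u hu
      simp only [mem_filter] at hu
      rw [SimpleGraph.mem_neighborFinset, SimpleGraph.compl_adj]
      exact ⟨fun h => hu.2.1 h.symm, hu.2.2⟩
    calc ((S.filter (fun u => u ≠ v ∧ ¬ G.Adj v u)).card : ℝ)
        ≤ ((Gᶜ.neighborFinset v).card : ℝ) := by exact_mod_cast Finset.card_le_card hsub
      _ = (Gᶜ.degree v : ℝ) := by rw [SimpleGraph.card_neighborFinset_eq_degree]
      _ ≤ s * n := hv
  · -- min degree bound
    intro v hv
    have hv' : (Gᶜ.degree v : ℝ) ≤ s * n := by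
      simpa [hS] using (mem_filter.1 hv).2
    have hcover : S ⊆ insert v ((S.filter (fun u => G.Adj v u)) ∪
        (S.filter (fun u => u ≠ v ∧ ¬ G.Adj v u))) := by
      intro u hu
      by_cases h1 : u = v
      · simp [h1]
      · by_cases h2 : G.Adj v u
        · simp [Finset.mem_insert, Finset.mem_union, mem_filter, hu, h2]
        · simp [Finset.mem_insert, Finset.mem_union, mem_filter, hu, h1, h2]
    have hcard : S.card ≤ 1 + (S.filter (fun u => G.Adj v u)).card +
        (S.filter (fun u => u ≠ v ∧ ¬ G.Adj v u)).card := by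
      calc S.card ≤ (insert v ((S.filter (fun u => G.Adj v u)) ∪
            (S.filter (fun u => u ≠ v ∧ ¬ G.Adj v u)))).card := Finset.card_le_card hcover
        _ ≤ 1 + ((S.filter (fun u => G.Adj v u)) ∪
            (S.filter (fun u => u ≠ v ∧ ¬ G.Adj v u))).card := by
            rw [add_comm]; exact Finset.card_insert_le _ _
        _ ≤ 1 + ((S.filter (fun u => G.Adj v u)).card +
            (S.filter (fun u => u ≠ v ∧ ¬ G.Adj v u)).card) := by
            exact Nat.add_le_add_left (Finset.card_union_le _ _) 1
        _ = _ := by ring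
    have hB : ((S.filter (fun u => u ≠ v ∧ ¬ G.Adj v u)).card : ℝ) ≤ s * n := by
      have hsub : S.filter (fun u => u ≠ v ∧ ¬ G.Adj v u) ⊆ Gᶜ.neighborFinset v := by
        intro u hu
        simp only [mem_filter] at hu
        rw [SimpleGraph.mem_neighborFinset, SimpleGraph.compl_adj]
        exact ⟨fun h => hu.2.1 h.symm, hu.2.2⟩
      calc ((S.filter (fun u => u ≠ v ∧ ¬ G.Adj v u)).card : ℝ)
          ≤ ((Gᶜ.neighborFinset v).card : ℝ) := by exact_mod_cast Finset.card_le_card hsub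
        _ = (Gᶜ.degree v : ℝ) := by rw [SimpleGraph.card_neighborFinset_eq_degree]
        _ ≤ s * n := hv'
    have hcard' : (S.card : ℝ) ≤ 1 + ((S.filter (fun u => G.Adj v u)).card : ℝ) +
        ((S.filter (fun u => u ≠ v ∧ ¬ G.Adj v u)).card : ℝ) := by exact_mod_cast hcard
    linarith
end
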